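/- Let A be a left brace of cardinality p^n with p prime and p > n+1, and let I be an ideal of A. Then p^i·I = {p^i·a : a ∈ I} is an ideal of A for every natural number i. -/

import Mathlib

/-!
Put `I₀ = I` and `I_{j+1} = A * I_j` (`leftSeries`). The semidirect product `(A, +) ⋊_λ (A, ∘)` is a
`p`-group, hence nilpotent, so `A * T = T` forces `T = 0`; since every proper step divides the order
by at least `p`, `I_n = 0`. Expanding `λ_{a^{∘m}} = (1 + (λ_a - 1))^m` binomially gives
`a^{∘m} * b = ∑ C(m, k) e_k` and `a^{∘m} = ∑ C(m, k + 1) e_k(a, a)` with `e_k = a * (⋯ * (a * b))`.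
For `a ∈ I` the iterate `e_k` lies in `I_{k-1}` (and `e_k(a, a)` in `I_{j+k}` when `a ∈ I_j`), so
only coefficients `C(p^i, k)` with `k ≤ n + 1 < p` survive, and `p^i` divides these. Hence
`a^{∘p^i} ∈ p^i (a + I_{j+1})` and `a^{∘p^i} * A ⊆ p^i I`. A descending induction along the series
then shows that `p^i I` is the subgroup of `(A, ∘)` generated by the `p^i`-th powers of elements of
`I`, which is normal because `I` is.
-/

class LeftBrace (A : Type*) extends AddCommGroup A where
  circ : A → A → A
  circ_assoc : ∀ a b c : A, circ (circ a b) c = circ a (circ b c)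
  circ_zero : ∀ a : A, circ a 0 = a
  zero_circ : ∀ a : A, circ 0 a = a
  inv : A → A
  circ_inv : ∀ a : A, circ a (inv a) = 0
  inv_circ : ∀ a : A, circ (inv a) a = 0
  circ_add : ∀ a b c : A, circ a (b + c) + a = circ a b + circ a c

namespace LeftBrace

variable {A : Type*} [LeftBrace A]

def star (a b : A) : A := circ a b - a - b

def subStarSet (S T : Set A) : AddSubgroup A :=
  AddSubgroup.closure {x | ∃ a ∈ S, ∃ b ∈ T, x = star a b}

def subStar (S T : AddSubgroup A) : AddSubgroup A := subStarSet (S : Set A) (T : Set A)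

/-- `leftPow A m` is `A^{m+1}` of the left chain `A^1 = A`, `A^{i+1} = A * A^i`. -/
def leftPow (A : Type*) [LeftBrace A] : ℕ → AddSubgroup A
  | 0 => ⊤
  | m + 1 => subStar ⊤ (leftPow A m)

def leftIdx (A : Type*) [LeftBrace A] (m : ℕ) : AddSubgroup A := leftPow A (m - 1)

/-- `rightPow A m` is `A^{(m+1)}` of the right chain `A^{(1)} = A`, `A^{(i+1)} = A^{(i)} * A`. -/
def rightPow (A : Type*) [LeftBrace A] : ℕ → AddSubgroup A
  | 0 => ⊤
  | m + 1 => subStar (rightPow A m) ⊤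

def rightIdx (A : Type*) [LeftBrace A] (m : ℕ) : AddSubgroup A := rightPow A (m - 1)

def strongPow (A : Type*) [LeftBrace A] : ℕ → AddSubgroup A
  | 0 => ⊤
  | m + 1 => ⨆ j : Fin (m + 1), subStar (strongPow A j) (strongPow A (m - j))
  termination_by m => m
  decreasing_by
  · exact j.isLt
  · exact Nat.lt_succ_of_le (Nat.sub_le m j)

def strongIdx (A : Type*) [LeftBrace A] (m : ℕ) : AddSubgroup A := strongPow A (m - 1)

/-- An ideal of a left brace, as a subset: closed under the additive group
operations, absorbing under `*` on both sides, and normal in `(A, ∘)`. -/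
def IsIdeal (I : Set A) : Prop :=
  (0 : A) ∈ I ∧ (∀ x ∈ I, ∀ y ∈ I, x + y ∈ I) ∧ (∀ x ∈ I, -x ∈ I) ∧
  (∀ a : A, ∀ i ∈ I, star a i ∈ I) ∧ (∀ a : A, ∀ i ∈ I, star i a ∈ I) ∧
  (∀ a : A, ∀ i ∈ I, circ (circ a i) (inv a) ∈ I)

/-- `circPow a m` is the product of `m` copies of `a` in the group `(A, ∘)`. -/
def circPow (a : A) : ℕ → A
  | 0 => 0
  | m + 1 => circ a (circPow a m)

/-- Membership in the subgroup of `(A, ∘)` generated by a subset. -/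
inductive circClosure (S : Set A) : A → Prop
  | of : ∀ x ∈ S, circClosure S x
  | zero : circClosure S 0
  | mul : ∀ x y : A, circClosure S x → circClosure S y → circClosure S (circ x y)
  | inv : ∀ x : A, circClosure S x → circClosure S (inv x)

end LeftBrace

namespace Subgroup

theorem eq_bot_of_le_commutator_top {G : Type*} [Group G] [Group.IsNilpotent G] {H : Subgroup G}
    (hH : H ≤ ⁅H, ⊤⁆) : H = ⊥ := by
  obtain ⟨c, hc⟩ := (nilpotent_iff_lowerCentralSeries (G := G)).mp inferInstance
  have hle : ∀ k, H ≤ lowerCentralSeries ⊤ k := by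
    intro k
    induction k with
    | zero => exact le_top
    | succ k ih => exact hH.trans (commutator_mono ih le_rfl)
  exact le_bot_iff.mp (hc ▸ hle c)

theorem normal_closure_of_conj_mem {G : Type*} [Group G] {s : Set G}
    (hs : ∀ g ∈ s, ∀ c : G, c * g * c⁻¹ ∈ s) : (closure s).Normal := by
  refine ⟨fun x hx c => ?_⟩
  induction hx using closure_induction with
  | mem g hg => exact subset_closure (hs g hg c)
  | one => simp
  | mul x y _ _ hx hy =>
    simpa only [mul_assoc, inv_mul_cancel_left] using mul_mem hx hy
  | inv x _ hx => simpa only [mul_inv_rev, inv_inv, mul_assoc] using inv_mem hx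

open scoped commutatorElement in
/-- In the semidirect product `N ⋊ G`, a finite `p`-group and hence nilpotent, the hypothesis says
that `H ≤ ⁅H, ⊤⁆`. -/
theorem eq_bot_of_le_closure_smul_mul_inv {p : ℕ} [Fact p.Prime] {N G : Type*} [Group N] [Group G]
    [MulDistribMulAction G N] [Finite N] [Finite G] (hN : IsPGroup p N) (hG : IsPGroup p G)
    {H : Subgroup N} (hH : H ≤ closure {x | ∃ g : G, ∃ h ∈ H, x = g • h * h⁻¹}) : H = ⊥ := by
  let φ := MulDistribMulAction.toMulAut G N
  have hP : IsPGroup p (SemidirectProduct N G φ) := by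
    obtain ⟨a, ha⟩ := (IsPGroup.iff_card).mp hN
    obtain ⟨b, hb⟩ := (IsPGroup.iff_card).mp hG
    exact IsPGroup.of_card (by rw [SemidirectProduct.card, ha, hb, ← pow_add])
  have : Finite (SemidirectProduct N G φ) := Finite.of_equiv _ SemidirectProduct.equivProd.symm
  have : Group.IsNilpotent (SemidirectProduct N G φ) := hP.isNilpotent
  refine (map_eq_bot_iff_of_injective H (SemidirectProduct.inl_injective (φ := φ))).mp
    (eq_bot_of_le_commutator_top ?_)
  rw [commutator_comm, map_le_iff_le_comap]
  refine hH.trans ((closure_le _).mpr ?_)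
  rintro _ ⟨g, h, hh, rfl⟩
  have hcomm : (SemidirectProduct.inl (g • h * h⁻¹) : SemidirectProduct N G φ) =
      ⁅(SemidirectProduct.inr g : SemidirectProduct N G φ), SemidirectProduct.inl h⁆ := by
    rw [commutatorElement_def, ← map_inv SemidirectProduct.inr g, ← SemidirectProduct.inl_aut,
      map_mul, map_inv]
    rfl
  rw [SetLike.mem_coe, mem_comap, hcomm]
  exact commutator_mem_commutator (mem_top _) (mem_map_of_mem _ hh)

end Subgroup

theorem Nat.Prime.pow_dvd_choose_pow {p i k : ℕ} (hp : p.Prime) (hk0 : k ≠ 0) (hkp : k < p) :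
    p ^ i ∣ (p ^ i).choose k := by
  obtain ⟨j, rfl⟩ := Nat.exists_eq_add_one_of_ne_zero hk0
  have hcop : (p ^ i).Coprime (j + 1) :=
    Nat.Coprime.pow_left i (hp.coprime_iff_not_dvd.mpr (Nat.not_dvd_of_pos_of_lt j.succ_pos hkp))
  refine hcop.dvd_of_dvd_mul_right ⟨(p ^ i - 1).choose j, ?_⟩
  have h := Nat.add_one_mul_choose_eq (p ^ i - 1) j
  rwa [Nat.sub_add_cancel (Nat.one_le_pow _ _ hp.pos), eq_comm] at h

namespace AddSubgroup

theorem card_mul_prime_le_card_of_lt {p n : ℕ} (hp : p.Prime) {G : Type*} [AddGroup G]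
    (hG : Nat.card G = p ^ n) {H K : AddSubgroup G} (hHK : H < K) :
    Nat.card H * p ≤ Nat.card K := by
  have : Finite G := Nat.finite_of_card_ne_zero (by simp [hG, hp.ne_zero])
  obtain ⟨c, -, hc⟩ := (Nat.dvd_prime_pow hp).mp
    (((relIndex_dvd_card H K).trans (card_dvd_of_le le_top)).trans (by rw [card_top, hG]))
  have hc0 : c ≠ 0 := by
    rintro rfl
    exact hHK.not_ge (relIndex_eq_one.mp (by rw [hc, pow_zero]))
  calc Nat.card H * p ≤ Nat.card H * H.relIndex K := by
        rw [hc]; exact Nat.mul_le_mul_left _ (Nat.le_self_pow hc0 p)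
    _ = Nat.card K := by
        rw [← relIndex_bot_left, ← relIndex_bot_left, relIndex_mul_relIndex _ _ _ bot_le hHK.le]

theorem eq_bot_of_chain_of_card_eq_prime_pow {p n : ℕ} (hp : p.Prime) {G : Type*} [AddGroup G]
    (hG : Nat.card G = p ^ n) (S : ℕ → AddSubgroup G) (hanti : ∀ j, S (j + 1) ≤ S j)
    (hstable : ∀ j, S (j + 1) = S j → S j = ⊥) : S n = ⊥ := by
  have : Finite G := Nat.finite_of_card_ne_zero (by simp [hG, hp.ne_zero])
  have key : ∀ j ≤ n, Nat.card (S j) * p ^ j ≤ p ^ n := by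
    intro j hj
    induction j with
    | zero => simpa [← hG] using card_le_of_le (le_top : S 0 ≤ ⊤)
    | succ j ih =>
      rcases (hanti j).lt_or_eq with hlt | heq
      · calc Nat.card (S (j + 1)) * p ^ (j + 1) = Nat.card (S (j + 1)) * p * p ^ j := by ring
          _ ≤ Nat.card (S j) * p ^ j :=
            Nat.mul_le_mul_right _ (card_mul_prime_le_card_of_lt hp hG hlt)
          _ ≤ p ^ n := ih (by omega)
      · rw [heq, hstable j heq, card_bot, one_mul]
        exact Nat.pow_le_pow_right hp.pos hj
  exact eq_bot_of_card_le _
    (Nat.le_of_mul_le_mul_right (by rw [one_mul]; exact key n le_rfl) (pow_pos hp.pos n))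

open Pointwise in
theorem sum_choose_prime_pow_smul_mem {M : Type*} [AddCommGroup M] {p n d : ℕ}
    (hp : p.Prime) (hd : d ≠ 0) (hnd : n + d ≤ p) (i : ℕ) {S : AddSubgroup M} {y : ℕ → M}
    (hyS : ∀ k, y k ∈ S) (hy : ∀ k, n ≤ k → y k = 0) (m : ℕ) :
    ∑ k ∈ Finset.range m, (p ^ i).choose (k + d) • y k ∈ (p ^ i) • S := by
  refine sum_mem fun k _ => ?_
  rcases lt_or_ge k n with hk | hk
  · obtain ⟨c, hc⟩ := hp.pow_dvd_choose_pow (i := i) (by omega : k + d ≠ 0) (by omega)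
    rw [hc, mul_smul]
    exact smul_mem_pointwise_smul _ _ _ (S.nsmul_mem (hyS k) c)
  · rw [hy k hk, smul_zero]
    exact zero_mem _

end AddSubgroup

theorem one_add_pow_eq_sum_choose {R : Type*} [Semiring R] (x : R) (m : ℕ) :
    (1 + x) ^ m = ∑ k ∈ Finset.range (m + 1), m.choose k • x ^ k := by
  rw [add_comm, (Commute.one_right x).add_pow]
  refine Finset.sum_congr rfl fun k _ => ?_
  rw [one_pow, mul_one, nsmul_eq_mul, Nat.cast_comm]

theorem sum_range_one_add_pow {R : Type*} [Semiring R] (x : R) (m : ℕ) :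
    ∑ k ∈ Finset.range m, (1 + x) ^ k = ∑ k ∈ Finset.range m, m.choose (k + 1) • x ^ k := by
  induction m with
  | zero => simp
  | succ m ih =>
    rw [Finset.sum_range_succ, ih, one_add_pow_eq_sum_choose, Finset.sum_range_succ _ m,
      Finset.sum_range_succ (fun k => (m + 1).choose (k + 1) • x ^ k), Nat.choose_self,
      Nat.choose_self, ← add_assoc, ← Finset.sum_add_distrib]
    congr 1
    refine Finset.sum_congr rfl fun k _ => ?_
    rw [Nat.choose_succ_succ', add_nsmul, add_comm]

theorem AddMonoid.End.finsetSum_apply {ι M : Type*} [AddCommMonoid M] (f : ι → AddMonoid.End M)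
    (s : Finset ι) (b : M) : (∑ i ∈ s, f i) b = ∑ i ∈ s, f i b :=
  AddMonoidHom.finsetSum_apply f s b

namespace LeftBrace

variable {A : Type*} [LeftBrace A]

def CircGroup (A : Type*) := A

instance : Group (CircGroup A) where
  mul := circ (A := A)
  one := (0 : A)
  inv := inv (A := A)
  mul_assoc := circ_assoc (A := A)
  one_mul := zero_circ (A := A)
  mul_one := circ_zero (A := A)
  inv_mul_cancel := inv_circ (A := A)

def toCirc : A ≃ CircGroup A := Equiv.refl A

theorem toCirc_circ (a b : A) : toCirc (circ a b) = toCirc a * toCirc b := rfl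

theorem toCirc_zero : toCirc (0 : A) = 1 := rfl

theorem toCirc_inv (a : A) : toCirc (inv a) = (toCirc a)⁻¹ := rfl

theorem toCirc_circPow (a : A) (m : ℕ) : toCirc (circPow a m) = toCirc a ^ m := by
  induction m with
  | zero => rfl
  | succ m ih => rw [circPow, toCirc_circ, ih, pow_succ']

def lam (a : A) : AddMonoid.End A where
  toFun x := circ a x - a
  map_zero' := by rw [circ_zero, sub_self]
  map_add' x y := by
    calc circ a (x + y) - a = circ a (x + y) + a - a - a := by abel
      _ = (circ a x - a) + (circ a y - a) := by rw [circ_add]; abel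

theorem lam_apply (a x : A) : lam a x = circ a x - a := rfl

theorem circ_eq_add_lam (a x : A) : circ a x = a + lam a x := by rw [lam_apply]; abel

theorem star_eq_lam_sub (a x : A) : star a x = lam a x - x := rfl

theorem lam_zero : lam (0 : A) = 1 := by
  ext x
  rw [lam_apply, zero_circ, sub_zero]
  rfl

theorem lam_circ (a b : A) : lam (circ a b) = lam a * lam b := by
  ext x
  change circ (circ a b) x - circ a b = lam a (circ b x - b)
  rw [map_sub, lam_apply, lam_apply, circ_assoc]
  abel

theorem lam_lam_inv (z y : A) : lam z (lam (inv z) y) = y := by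
  change (lam z * lam (inv z)) y = y
  rw [← lam_circ, circ_inv, lam_zero]
  rfl

theorem inv_eq_lam_neg (a : A) : inv a = lam (inv a) (-a) := by
  have h := circ_eq_add_lam (inv a) a
  rw [inv_circ] at h
  rw [map_neg]
  exact eq_neg_of_add_eq_zero_left h.symm

theorem star_zero_left (b : A) : star (0 : A) b = 0 := by
  rw [star_eq_lam_sub, lam_zero, AddMonoid.End.one_apply, sub_self]

theorem star_circ (x y b : A) : star (circ x y) b = lam x (star y b) + star x b := by
  rw [star_eq_lam_sub, star_eq_lam_sub, star_eq_lam_sub, lam_circ, map_sub]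
  change lam x (lam y b) - b = lam x (lam y b) - lam x b + (lam x b - b)
  abel

theorem lam_star (z a b : A) : lam z (star a b) = star (circ (circ z a) (inv z)) (lam z b) := by
  have hconj : circ (circ (circ z a) (inv z)) z = circ z a := by
    rw [circ_assoc, inv_circ, circ_zero]
  rw [star_eq_lam_sub, star_eq_lam_sub, map_sub]
  congr 1
  change (lam z * lam a) b = (lam (circ (circ z a) (inv z)) * lam z) b
  rw [← lam_circ, ← lam_circ, hconj]

theorem lam_circPow (a : A) (m : ℕ) : lam (circPow a m) = lam a ^ m := by
  induction m with
  | zero => exact lam_zero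
  | succ m ih => rw [circPow, lam_circ, ih, pow_succ']

theorem lam_sub_one_pow_apply (a b : A) (k : ℕ) : ((lam a - 1) ^ k) b = (star a)^[k] b := by
  induction k with
  | zero => rfl
  | succ k ih =>
    rw [pow_succ', Function.iterate_succ_apply', ← ih]
    rfl

theorem star_circPow (a b : A) (m : ℕ) :
    star (circPow a m) b = ∑ k ∈ Finset.range m, m.choose (k + 1) • (star a)^[k + 1] b := by
  have hexp : lam a ^ m = ∑ k ∈ Finset.range (m + 1), m.choose k • (lam a - 1) ^ k := by
    rw [← one_add_pow_eq_sum_choose, add_sub_cancel]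
  rw [star_eq_lam_sub, lam_circPow, hexp, AddMonoid.End.finsetSum_apply, Finset.sum_range_succ',
    Nat.choose_zero_right, pow_zero, one_smul, AddMonoid.End.one_apply, add_sub_cancel_right]
  refine Finset.sum_congr rfl fun k _ => ?_
  rw [← lam_sub_one_pow_apply]
  rfl

theorem circPow_eq_sum (a : A) (m : ℕ) :
    circPow a m = ∑ k ∈ Finset.range m, m.choose (k + 1) • (star a)^[k] a := by
  have hgeom : circPow a m = ∑ k ∈ Finset.range m, (lam a ^ k) a := by
    induction m with
    | zero => rfl
    | succ m ih =>
      rw [circPow, circ_eq_add_lam, ih, map_sum, Finset.sum_range_succ']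
      simp only [pow_succ']
      rw [add_comm]
      rfl
  rw [hgeom, ← AddMonoid.End.finsetSum_apply, ← add_sub_cancel (1 : AddMonoid.End A) (lam a),
    sum_range_one_add_pow, AddMonoid.End.finsetSum_apply]
  refine Finset.sum_congr rfl fun k _ => ?_
  rw [← lam_sub_one_pow_apply]
  rfl

theorem circPow_sub_nsmul (a : A) (m : ℕ) :
    circPow a m - m • a = ∑ k ∈ Finset.range (m - 1), m.choose (k + 2) • (star a)^[k + 1] a := by
  cases m with
  | zero => simp [circPow]
  | succ m =>
    rw [circPow_eq_sum, Finset.sum_range_succ', Nat.choose_one_right, Function.iterate_zero_apply,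
      add_sub_cancel_right, Nat.add_sub_cancel]

def IsLamInvariant (Q : AddSubgroup A) : Prop := ∀ z, ∀ x ∈ Q, lam z x ∈ Q

namespace IsLamInvariant

variable {Q : AddSubgroup A} (hQ : IsLamInvariant Q)
include hQ

theorem star_mem (a : A) {x : A} (hx : x ∈ Q) : star a x ∈ Q :=
  Q.sub_mem (hQ a x hx) hx

open Pointwise in
theorem smul (m : ℕ) : IsLamInvariant (m • Q) := by
  intro z x hx
  obtain ⟨u, hu, rfl⟩ := (AddSubgroup.mem_smul_pointwise_iff_exists _ _ _).mp hx
  rw [map_nsmul]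
  exact AddSubgroup.smul_mem_pointwise_smul _ _ _ (hQ z u hu)

def toCircSubgroup : Subgroup (CircGroup A) where
  carrier := {g | toCirc.symm g ∈ Q}
  one_mem' := Q.zero_mem
  mul_mem' {x y} hx hy := by
    change circ (toCirc.symm x) (toCirc.symm y) ∈ Q
    rw [circ_eq_add_lam]
    exact Q.add_mem hx (hQ _ _ hy)
  inv_mem' {x} hx := by
    change inv (toCirc.symm x) ∈ Q
    rw [inv_eq_lam_neg]
    exact hQ _ _ (Q.neg_mem hx)

def starMemSubgroup : Subgroup (CircGroup A) where
  carrier := {g | ∀ b, star (toCirc.symm g) b ∈ Q}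
  one_mem' b := by
    change star (0 : A) b ∈ Q
    rw [star_zero_left]
    exact Q.zero_mem
  mul_mem' {x y} hx hy b := by
    change star (circ (toCirc.symm x) (toCirc.symm y)) b ∈ Q
    rw [star_circ]
    exact Q.add_mem (hQ _ _ (hy b)) (hx b)
  inv_mem' {x} hx b := by
    have h := star_circ (inv (toCirc.symm x)) (toCirc.symm x) b
    rw [inv_circ, star_zero_left, eq_comm, add_eq_zero_iff_eq_neg'] at h
    change star (inv (toCirc.symm x)) b ∈ Q
    rw [h]
    exact Q.neg_mem (hQ _ _ (hx b))

end IsLamInvariant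

instance : MulDistribMulAction (CircGroup A) (Multiplicative A) where
  smul g x := Multiplicative.ofAdd (lam (toCirc.symm g) x.toAdd)
  one_smul x := by
    change Multiplicative.ofAdd (lam 0 x.toAdd) = x
    rw [lam_zero]
    rfl
  mul_smul g h x := by
    change Multiplicative.ofAdd (lam (circ (toCirc.symm g) (toCirc.symm h)) x.toAdd) = _
    rw [lam_circ]
    rfl
  smul_mul g x y := map_add (lam (toCirc.symm g)) x.toAdd y.toAdd
  smul_one g := map_zero (lam (toCirc.symm g))

theorem star_mem_subStar_top {T : AddSubgroup A} (a : A) {b : A} (hb : b ∈ T) :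
    star a b ∈ subStar ⊤ T :=
  AddSubgroup.subset_closure ⟨a, trivial, b, hb, rfl⟩

theorem subStar_top_mono {T T' : AddSubgroup A} (h : T ≤ T') : subStar ⊤ T ≤ subStar ⊤ T' :=
  AddSubgroup.closure_mono fun _ ⟨a, ha, b, hb, hx⟩ => ⟨a, ha, b, h hb, hx⟩

theorem eq_bot_of_le_subStar_top {p n : ℕ} (hp : p.Prime) (hcard : Nat.card A = p ^ n)
    {T : AddSubgroup A} (hT : T ≤ subStar ⊤ T) : T = ⊥ := by
  have : Fact p.Prime := ⟨hp⟩
  have : Finite A := Nat.finite_of_card_ne_zero (by simp [hcard, hp.ne_zero])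
  have : Finite (CircGroup A) := inferInstanceAs (Finite A)
  suffices h : T.toSubgroup = ⊥ from AddSubgroup.toSubgroup.injective (h.trans (map_bot _).symm)
  refine Subgroup.eq_bot_of_le_closure_smul_mul_inv (IsPGroup.of_card (G := Multiplicative A) hcard)
    (IsPGroup.of_card (G := CircGroup A) hcard) ?_
  calc T.toSubgroup ≤ (subStar ⊤ T).toSubgroup := AddSubgroup.toSubgroup.monotone hT
    _ ≤ _ := by
      rw [subStar, subStarSet, AddSubgroup.toSubgroup_closure]
      refine Subgroup.closure_mono ?_
      rintro x ⟨a, -, b, hb, hx⟩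
      refine ⟨toCirc a, Multiplicative.ofAdd b, hb, ?_⟩
      rw [← ofAdd_toAdd x, hx, star_eq_lam_sub, sub_eq_add_neg]
      rfl

def leftSeries (S : AddSubgroup A) : ℕ → AddSubgroup A
  | 0 => S
  | j + 1 => subStar ⊤ (leftSeries S j)

theorem iterate_star_mem_leftSeries {S : AddSubgroup A} (a : A) {j : ℕ} {b : A}
    (hb : b ∈ leftSeries S j) (k : ℕ) : (star a)^[k] b ∈ leftSeries S (j + k) := by
  induction k with
  | zero => exact hb
  | succ k ih =>
    rw [Function.iterate_succ_apply']
    exact star_mem_subStar_top a ih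

section LeftIdeal

variable {S : AddSubgroup A} (hS : subStar ⊤ S ≤ S)
include hS

theorem leftSeries_succ_le (j : ℕ) : leftSeries S (j + 1) ≤ leftSeries S j := by
  induction j with
  | zero => exact hS
  | succ j ih => exact subStar_top_mono ih

theorem leftSeries_antitone : Antitone (leftSeries S) :=
  antitone_nat_of_succ_le (leftSeries_succ_le hS)

theorem isLamInvariant_leftSeries (j : ℕ) : IsLamInvariant (leftSeries S j) := by
  induction j with
  | zero =>
    intro z x hx
    rw [← sub_add_cancel (lam z x) x]
    exact S.add_mem (hS (star_mem_subStar_top z hx)) hx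
  | succ j ih =>
    intro z x hx
    refine (AddSubgroup.closure_le (leftSeries S (j + 1) |>.comap (lam z)) |>.mpr ?_) hx
    rintro _ ⟨a, -, b, hb, rfl⟩
    change lam z (star a b) ∈ leftSeries S (j + 1)
    rw [lam_star]
    exact star_mem_subStar_top _ (ih _ _ hb)

theorem leftSeries_eq_bot {p n : ℕ} (hp : p.Prime) (hcard : Nat.card A = p ^ n) :
    leftSeries S n = ⊥ :=
  AddSubgroup.eq_bot_of_chain_of_card_eq_prime_pow hp hcard _ (leftSeries_succ_le hS)
    fun _ hj => eq_bot_of_le_subStar_top hp hcard hj.ge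

end LeftIdeal

def circPowSubgroup (I : AddSubgroup A) (m : ℕ) : Subgroup (CircGroup A) :=
  Subgroup.closure {g | ∃ a ∈ I, g = toCirc (circPow a m)}

theorem circPowSubgroup_normal {I : AddSubgroup A}
    (hI : ∀ a, ∀ x ∈ I, circ (circ a x) (inv a) ∈ I) (m : ℕ) : (circPowSubgroup I m).Normal := by
  refine Subgroup.normal_closure_of_conj_mem ?_
  rintro _ ⟨a, ha, rfl⟩ c
  refine ⟨circ (circ (toCirc.symm c) a) (inv (toCirc.symm c)), hI _ _ ha, ?_⟩
  rw [toCirc_circPow, toCirc_circPow, toCirc_circ, toCirc_circ, toCirc_inv, conj_pow,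
    Equiv.apply_symm_apply]

section Ideal

open Pointwise

variable {p n : ℕ} (hp : p.Prime) (hcard : Nat.card A = p ^ n) {I : AddSubgroup A}
  (hIl : subStar ⊤ I ≤ I)
include hp hcard hIl

theorem star_circPow_mem (hpn : n + 1 ≤ p) (hIr : subStar I ⊤ ≤ I) {a : A} (ha : a ∈ I) (b : A)
    (i : ℕ) : star (circPow a (p ^ i)) b ∈ (p ^ i) • I := by
  have hmem (k : ℕ) : (star a)^[k + 1] b ∈ leftSeries I k := by
    have h := iterate_star_mem_leftSeries (j := 0) a
      (hIr (AddSubgroup.subset_closure ⟨a, ha, b, trivial, rfl⟩)) k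
    rwa [zero_add, ← Function.iterate_succ_apply] at h
  rw [star_circPow]
  refine AddSubgroup.sum_choose_prime_pow_smul_mem hp one_ne_zero hpn i
    (fun k => leftSeries_antitone hIl (Nat.zero_le k) (hmem k)) (fun k hk => ?_) _
  rw [← AddSubgroup.mem_bot, ← leftSeries_eq_bot hIl hp hcard]
  exact leftSeries_antitone hIl hk (hmem k)

theorem exists_circPow_eq_pow_smul_add (hpn : n + 2 ≤ p) {j : ℕ} {a : A}
    (ha : a ∈ leftSeries I j) (i : ℕ) :
    ∃ c ∈ leftSeries I (j + 1), circPow a (p ^ i) = p ^ i • (a + c) := by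
  have hmem : circPow a (p ^ i) - p ^ i • a ∈ (p ^ i) • leftSeries I (j + 1) := by
    rw [circPow_sub_nsmul]
    refine AddSubgroup.sum_choose_prime_pow_smul_mem hp two_ne_zero hpn i
      (fun k => leftSeries_antitone hIl (by omega) (iterate_star_mem_leftSeries a ha (k + 1)))
      (fun k hk => ?_) _
    rw [← AddSubgroup.mem_bot, ← leftSeries_eq_bot hIl hp hcard]
    exact leftSeries_antitone hIl (by omega) (iterate_star_mem_leftSeries a ha (k + 1))
  obtain ⟨c, hc, h⟩ := (AddSubgroup.mem_smul_pointwise_iff_exists _ _ _).mp hmem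
  exact ⟨c, hc, by rw [smul_add, h, add_sub_cancel]⟩

theorem toCirc_pow_smul_mem_circPowSubgroup (hpn : n + 2 ≤ p) (i : ℕ) {x : A} (hx : x ∈ I) :
    toCirc (p ^ i • x) ∈ circPowSubgroup I (p ^ i) := by
  suffices h : ∀ k, ∀ x ∈ leftSeries I (n - k), toCirc (p ^ i • x) ∈ circPowSubgroup I (p ^ i) from
    h n x (by rwa [Nat.sub_self])
  intro k
  induction k with
  | zero =>
    intro x hx
    rw [Nat.sub_zero, leftSeries_eq_bot hIl hp hcard, AddSubgroup.mem_bot] at hx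
    rw [hx, smul_zero, toCirc_zero]
    exact one_mem _
  | succ k ih =>
    intro x hx
    obtain ⟨c, hc, hz⟩ := exists_circPow_eq_pow_smul_add hp hcard hIl hpn hx i
    set z := circPow x (p ^ i)
    -- the second factor lies one step further down the left series
    have hdecomp : p ^ i • x = circ z (p ^ i • lam (inv z) (-c)) := by
      rw [circ_eq_add_lam, map_nsmul, lam_lam_inv, hz, smul_neg, smul_add, add_neg_cancel_right]
    rw [hdecomp, toCirc_circ]
    refine mul_mem (Subgroup.subset_closure ⟨x, leftSeries_antitone hIl (Nat.zero_le _) hx, rfl⟩)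
      (ih _ (isLamInvariant_leftSeries hIl _ _ _ (leftSeries_antitone hIl (by omega) (neg_mem hc))))

theorem toCirc_mem_circPowSubgroup_iff (hpn : n + 2 ≤ p) (i : ℕ) {x : A} :
    toCirc x ∈ circPowSubgroup I (p ^ i) ↔ x ∈ (p ^ i) • I := by
  refine ⟨fun hx => (Subgroup.closure_le
    ((isLamInvariant_leftSeries hIl 0).smul (p ^ i)).toCircSubgroup).mpr ?_ hx, ?_⟩
  · rintro _ ⟨a, ha, rfl⟩
    obtain ⟨c, hc, h⟩ := exists_circPow_eq_pow_smul_add hp hcard hIl hpn (j := 0) ha i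
    change circPow a (p ^ i) ∈ (p ^ i) • I
    rw [h]
    exact AddSubgroup.smul_mem_pointwise_smul _ _ _ (I.add_mem ha (hIl hc))
  · intro hx
    obtain ⟨u, hu, rfl⟩ := (AddSubgroup.mem_smul_pointwise_iff_exists _ _ _).mp hx
    exact toCirc_pow_smul_mem_circPowSubgroup hp hcard hIl hpn i hu

theorem isIdeal_pow_smul (hpn : n + 1 < p) (hIr : subStar I ⊤ ≤ I)
    (hIn : ∀ a, ∀ x ∈ I, circ (circ a x) (inv a) ∈ I) (i : ℕ) :
    IsIdeal ((p ^ i • I : AddSubgroup A) : Set A) := by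
  have hlam := (isLamInvariant_leftSeries hIl 0).smul (p ^ i)
  have hmem_iff (x : A) := toCirc_mem_circPowSubgroup_iff hp hcard hIl hpn i (x := x)
  have hstar : circPowSubgroup I (p ^ i) ≤ hlam.starMemSubgroup := by
    refine (Subgroup.closure_le _).mpr ?_
    rintro _ ⟨a, ha, rfl⟩ b
    exact star_circPow_mem hp hcard hIl hpn.le hIr ha b i
  refine ⟨zero_mem _, fun x hx y hy => add_mem hx hy, fun x hx => neg_mem hx,
    fun a x hx => hlam.star_mem a hx, fun a x hx => hstar ((hmem_iff x).mpr hx) a,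
    fun a x hx => (hmem_iff _).mp ?_⟩
  rw [toCirc_circ, toCirc_circ, toCirc_inv]
  exact (circPowSubgroup_normal hIn _).conj_mem _ ((hmem_iff x).mpr hx) _

end Ideal

def IsIdeal.toAddSubgroup {I : Set A} (hI : IsIdeal I) : AddSubgroup A where
  carrier := I
  zero_mem' := hI.1
  add_mem' {x y} hx hy := hI.2.1 x hx y hy
  neg_mem' {x} hx := hI.2.2.1 x hx

theorem IsIdeal.subStar_top_left_le {I : Set A} (hI : IsIdeal I) :
    subStar ⊤ hI.toAddSubgroup ≤ hI.toAddSubgroup :=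
  (AddSubgroup.closure_le _).mpr fun _ ⟨a, _, b, hb, h⟩ => h ▸ hI.2.2.2.1 a b hb

theorem IsIdeal.subStar_top_right_le {I : Set A} (hI : IsIdeal I) :
    subStar hI.toAddSubgroup ⊤ ≤ hI.toAddSubgroup :=
  (AddSubgroup.closure_le _).mpr fun _ ⟨a, ha, b, _, h⟩ => h ▸ hI.2.2.2.2.1 b a ha

end LeftBrace

open LeftBrace Pointwise in
theorem smul_ideal_isIdeal_general (p n : ℕ) (hp : p.Prime) (hpn : n + 1 < p)
    (A : Type*) [LeftBrace A] (hcard : Nat.card A = p ^ n)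
    (I : Set A) (hI : IsIdeal I) (i : ℕ) :
    IsIdeal {x : A | ∃ a ∈ I, x = p ^ i • a} := by
  have hset :
      {x : A | ∃ a ∈ I, x = p ^ i • a} = ((p ^ i • hI.toAddSubgroup : AddSubgroup A) : Set A) := by
    ext x
    rw [SetLike.mem_coe, AddSubgroup.mem_smul_pointwise_iff_exists]
    exact exists_congr fun a => and_congr_right fun _ => eq_comm
  rw [hset]
  exact isIdeal_pow_smul hp hcard hI.subStar_top_left_le hpn hI.subStar_top_right_le
    hI.2.2.2.2.2 i

open LeftBrace in
/-- in a left brace of cardinality `p^n` with `p > n+1` prime, if `I`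
is an ideal then so is `p^i·I`, for every `i`. -/
theorem smul_ideal_isIdeal (p n : ℕ) (hp : p.Prime) (hpn : n + 1 < p)
    (A : Type*) [LeftBrace A] [Fintype A] (hcard : Nat.card A = p ^ n)
    (I : Set A) (hI : IsIdeal I) (i : ℕ) :
    IsIdeal {x : A | ∃ a ∈ I, x = p ^ i • a} :=
  smul_ideal_isIdeal_general p n hp hpn A hcard I hI i
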